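/- arXiv:2309.10114 — 2 statements merged into one kernel-verified Lean document; each statement's English description precedes it below -/
import Mathlib

section
/- Let M = N, Θ ∈ ℝ^{M×M} invertible, γ > 0, H = [I_M 0] the M×2M sampling matrix, and A the 2M×2M matrix with upper-right block Θ⁻¹ and all other blocks zero. Then x* = [I_M; Θ] y is the unique solution of the linear system (HᵀH + γ(I−A)ᵀHᵀH(I−A)) x = Hᵀ y for any y ∈ ℝ^M. -/
open Matrix

theorem stmt8 (M : ℕ) (Θ : Matrix (Fin M) (Fin M) ℝ)
    (hΘ : IsUnit Θ.det) (γ : ℝ) (hγ : 0 < γ) (y : Fin M → ℝ) :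
    let H : Matrix (Fin M) (Fin M ⊕ Fin M) ℝ := Matrix.fromCols 1 0
    let A : Matrix (Fin M ⊕ Fin M) (Fin M ⊕ Fin M) ℝ :=
      Matrix.fromBlocks 0 Θ⁻¹ 0 0
    let C := Hᵀ * H + γ • ((1 - A)ᵀ * (Hᵀ * H) * (1 - A))
    ∀ x : (Fin M ⊕ Fin M) → ℝ,
      C *ᵥ x = Hᵀ *ᵥ y ↔ x = Sum.elim y (Θ *ᵥ y) := by
  intro H A C x
  have hγ0 : γ ≠ 0 := ne_of_gt hγ
  have hHtH : Hᵀ * H = Matrix.fromBlocks (1 : Matrix (Fin M) (Fin M) ℝ) 0 0 0 := by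
    simp only [H, Matrix.transpose_fromCols, Matrix.transpose_one, Matrix.transpose_zero,
      Matrix.fromRows_mul_fromCols]
    simp
  have h1A : (1 : Matrix (Fin M ⊕ Fin M) (Fin M ⊕ Fin M) ℝ) - A =
      Matrix.fromBlocks 1 (-Θ⁻¹) 0 1 := by
    ext i j
    rcases i with i | i <;> rcases j with j | j <;>
      simp [A, Matrix.fromBlocks, Matrix.one_apply]
  have hC : C = Matrix.fromBlocks ((1 + γ) • 1) (-(γ • Θ⁻¹))
      (-(γ • Θ⁻¹ᵀ)) (γ • (Θ⁻¹ᵀ * Θ⁻¹)) := by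
    show Hᵀ * H + γ • ((1 - A)ᵀ * (Hᵀ * H) * (1 - A)) = _
    rw [hHtH, h1A, Matrix.fromBlocks_transpose, Matrix.fromBlocks_multiply,
      Matrix.fromBlocks_multiply, Matrix.fromBlocks_smul, Matrix.fromBlocks_add]
    simp [add_smul, smul_neg, Matrix.transpose_neg, Matrix.neg_mul, Matrix.mul_neg, neg_neg]
  have hHty : Hᵀ *ᵥ y = Sum.elim y 0 := by
    simp only [H, Matrix.transpose_fromCols, Matrix.transpose_one, Matrix.transpose_zero,
      Matrix.fromRows_mulVec, Matrix.one_mulVec, Matrix.zero_mulVec]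
  have hΘt : IsUnit (Θᵀ).det := by rwa [Matrix.det_transpose]
  have hinv : Θ⁻¹ᵀ = (Θᵀ)⁻¹ := Θ.transpose_nonsing_inv
  rw [hC, hHty, Matrix.fromBlocks_mulVec]
  constructor
  · intro h
    have h1 : (1 + γ) • (x ∘ Sum.inl) + -(γ • (Θ⁻¹ *ᵥ (x ∘ Sum.inr))) = y := by
      have := congrArg (· ∘ Sum.inl) h
      simpa [Matrix.neg_mulVec, Matrix.smul_mulVec, Matrix.one_mulVec] using this
    have h2 : -(γ • (Θ⁻¹ᵀ *ᵥ (x ∘ Sum.inl)))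
        + γ • (Θ⁻¹ᵀ *ᵥ (Θ⁻¹ *ᵥ (x ∘ Sum.inr))) = 0 := by
      have := congrArg (· ∘ Sum.inr) h
      simpa [Matrix.neg_mulVec, Matrix.smul_mulVec,
        ← Matrix.mulVec_mulVec] using this
    have h3 : Θ⁻¹ᵀ *ᵥ (Θ⁻¹ *ᵥ (x ∘ Sum.inr) - (x ∘ Sum.inl)) = 0 := by
      have h4 : γ • (Θ⁻¹ᵀ *ᵥ (Θ⁻¹ *ᵥ (x ∘ Sum.inr) - (x ∘ Sum.inl))) = 0 := by
        rw [Matrix.mulVec_sub, smul_sub, ← h2]; abel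
      rcases smul_eq_zero.mp h4 with h' | h'
      · exact absurd h' hγ0
      · exact h'
    have h5 : Θ⁻¹ *ᵥ (x ∘ Sum.inr) - (x ∘ Sum.inl) = 0 := by
      have := congrArg (fun w => Θᵀ *ᵥ w) h3
      simpa [hinv, Matrix.mulVec_mulVec, Matrix.mul_nonsing_inv _ hΘt,
        Matrix.one_mulVec] using this
    have h6 : Θ⁻¹ *ᵥ (x ∘ Sum.inr) = x ∘ Sum.inl := sub_eq_zero.mp h5
    have hu : x ∘ Sum.inl = y := by
      rw [← h1, h6]; funext i; simp; ring
    have hv : x ∘ Sum.inr = Θ *ᵥ y := by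
      rw [← hu, ← h6, Matrix.mulVec_mulVec, Matrix.mul_nonsing_inv _ hΘ,
        Matrix.one_mulVec]
    funext i
    cases i with
    | inl i => exact congrFun hu i
    | inr i => exact congrFun hv i
  · intro h
    subst h
    rw [show (Sum.elim y (Θ *ᵥ y)) ∘ Sum.inl = y from rfl,
      show (Sum.elim y (Θ *ᵥ y)) ∘ Sum.inr = Θ *ᵥ y from rfl]
    have hinvΘ : Θ⁻¹ *ᵥ (Θ *ᵥ y) = y := by
      rw [Matrix.mulVec_mulVec, Matrix.nonsing_inv_mul _ hΘ, Matrix.one_mulVec]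
    have T1 : ((1 + γ) • (1 : Matrix (Fin M) (Fin M) ℝ)) *ᵥ y
        + (-(γ • Θ⁻¹)) *ᵥ (Θ *ᵥ y) = y := by
      rw [Matrix.neg_mulVec, Matrix.smul_mulVec, Matrix.smul_mulVec,
        Matrix.one_mulVec, hinvΘ]
      funext i; simp; ring
    have T2 : (-(γ • Θ⁻¹ᵀ)) *ᵥ y + (γ • (Θ⁻¹ᵀ * Θ⁻¹)) *ᵥ (Θ *ᵥ y) = 0 := by
      have : (Θ⁻¹ᵀ * Θ⁻¹) *ᵥ (Θ *ᵥ y) = Θ⁻¹ᵀ *ᵥ y := by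
        rw [← Matrix.mulVec_mulVec, hinvΘ]
      rw [Matrix.neg_mulVec, Matrix.smul_mulVec, Matrix.smul_mulVec, this,
        neg_add_cancel]
    rw [T1, T2]
end

section
/- Joint denoise-then-interpolate separability: with M = N, Θ ∈ ℝ^{M×M} invertible, L ∈ ℝ^{M×M} symmetric PSD, μ, γ > 0, H = [I 0], A = [[0, Θ⁻¹],[0,0]], the unique solution of (HᵀH + γ(I−A)ᵀHᵀH(I−A) + μHᵀLH) x = Hᵀ y is x* = [Ψ; ΘΨ] y where Ψ = (I + μL)⁻¹. -/
open Matrix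

theorem stmt11 (M : ℕ) (Θ : Matrix (Fin M) (Fin M) ℝ) (hΘ : IsUnit Θ.det)
    (L : Matrix (Fin M) (Fin M) ℝ) (hsym : L.IsSymm) (hpsd : L.PosSemidef)
    (μ γ : ℝ) (hμ : 0 < μ) (hγ : 0 < γ) (y : Fin M → ℝ) :
    let H : Matrix (Fin M) (Fin M ⊕ Fin M) ℝ := Matrix.fromCols 1 0
    let A : Matrix (Fin M ⊕ Fin M) (Fin M ⊕ Fin M) ℝ :=
      Matrix.fromBlocks 0 Θ⁻¹ 0 0
    let C := Hᵀ * H + γ • ((1 - A)ᵀ * (Hᵀ * H) * (1 - A)) + μ • (Hᵀ * L * H)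
    let Ψ := ((1 : Matrix (Fin M) (Fin M) ℝ) + μ • L)⁻¹
    ∀ x : (Fin M ⊕ Fin M) → ℝ,
      C *ᵥ x = Hᵀ *ᵥ y ↔ x = Sum.elim (Ψ *ᵥ y) (Θ *ᵥ (Ψ *ᵥ y)) := by
  intro H A C Ψ x
  have hμL : (μ • L).PosSemidef := by
    refine .of_dotProduct_mulVec_nonneg ?_ fun v => ?_
    · unfold Matrix.IsHermitian
      rw [conjTranspose_smul, hpsd.1]
      simp
    · rw [smul_mulVec, dotProduct_smul]
      simpa using mul_nonneg hμ.le (hpsd.dotProduct_mulVec_nonneg v)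
  have hpd : ((1 : Matrix (Fin M) (Fin M) ℝ) + μ • L).PosDef :=
    Matrix.PosDef.add_posSemidef Matrix.PosDef.one hμL
  have hdet : IsUnit ((1 : Matrix (Fin M) (Fin M) ℝ) + μ • L).det :=
    hpd.det_pos.ne'.isUnit
  have hΨl : Ψ * ((1 : Matrix (Fin M) (Fin M) ℝ) + μ • L) = 1 :=
    nonsing_inv_mul _ hdet
  have hΨr : ((1 : Matrix (Fin M) (Fin M) ℝ) + μ • L) * Ψ = 1 :=
    mul_nonsing_inv _ hdet
  have hΘ1 : Θ * Θ⁻¹ = 1 := mul_nonsing_inv _ hΘ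
  have hΘ2 : Θ⁻¹ * Θ = 1 := nonsing_inv_mul _ hΘ
  have hC : C = fromBlocks
      ((1 + γ) • (1 : Matrix (Fin M) (Fin M) ℝ) + μ • L)
      (-(γ • Θ⁻¹)) (-(γ • Θ⁻¹ᵀ)) (γ • (Θ⁻¹ᵀ * Θ⁻¹)) := by
    simp only [C, H, A]
    rw [show (1 : Matrix (Fin M ⊕ Fin M) (Fin M ⊕ Fin M) ℝ) =
        fromBlocks 1 0 0 1 from (fromBlocks_one).symm]
    simp only [transpose_fromCols, fromRows_mul_fromCols, Matrix.mul_one,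
      Matrix.one_mul, Matrix.mul_zero, Matrix.zero_mul, transpose_zero, transpose_one,
      sub_eq_add_neg, fromBlocks_neg, fromBlocks_add, fromBlocks_transpose,
      fromBlocks_multiply, fromBlocks_smul]
    ext i j
    rcases i with i|i <;> rcases j with j|j <;> simp [fromBlocks] <;> ring
  have hHy : Hᵀ *ᵥ y = Sum.elim y 0 := by
    simp [H, transpose_fromCols]
  set x₁ : Fin M → ℝ := x ∘ Sum.inl with hx1
  set x₂ : Fin M → ℝ := x ∘ Sum.inr with hx2
  rw [hC, hHy, fromBlocks_mulVec]
  rw [show x = Sum.elim x₁ x₂ from (Sum.elim_comp_inl_inr x).symm]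
  rw [Sum.elim_eq_iff, Sum.elim_eq_iff]
  simp only [Sum.elim_comp_inl, Sum.elim_comp_inr]
  simp only [add_mulVec, neg_mulVec, smul_mulVec, one_smul, Matrix.one_mulVec,
    ← Matrix.mulVec_mulVec]
  constructor
  · rintro ⟨h1, h2⟩
    -- from h2 : Θ⁻¹ x₂ = x₁
    have key : Θ⁻¹ *ᵥ x₂ = x₁ := by
      have h2' : Θ⁻¹ᵀ *ᵥ (Θ⁻¹ *ᵥ x₂ - x₁) = 0 := by
        have := h2
        have hγ' : γ • (Θ⁻¹ᵀ *ᵥ (Θ⁻¹ *ᵥ x₂ - x₁)) = 0 := by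
          rw [Matrix.mulVec_sub, smul_sub]
          rw [← this]
          abel
        have := smul_eq_zero.mp hγ'
        rcases this with h | h
        · exact absurd h hγ.ne'
        · exact h
      have := congrArg (fun v => Θᵀ *ᵥ v) h2'
      simp only [Matrix.mulVec_mulVec, Matrix.mulVec_zero] at this
      rw [← Matrix.transpose_mul, hΘ2, transpose_one, Matrix.one_mulVec] at this
      exact sub_eq_zero.mp this
    have hx2eq : x₂ = Θ *ᵥ x₁ := by
      have := congrArg (fun v => Θ *ᵥ v) key
      simpa [Matrix.mulVec_mulVec, hΘ1, Matrix.one_mulVec] using this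
    have h1' : ((1 : Matrix (Fin M) (Fin M) ℝ) + μ • L) *ᵥ x₁ = y := by
      rw [key] at h1
      rw [add_mulVec, Matrix.one_mulVec, smul_mulVec]
      rw [add_smul, one_smul] at h1
      calc x₁ + μ • (L *ᵥ x₁) = x₁ + γ • x₁ + μ • (L *ᵥ x₁) + -(γ • x₁) := by abel
        _ = y := h1
    have hx1eq : x₁ = Ψ *ᵥ y := by
      have := congrArg (fun v => Ψ *ᵥ v) h1'
      simpa [Matrix.mulVec_mulVec, hΨl, Matrix.one_mulVec] using this
    exact ⟨hx1eq, by rw [hx2eq, hx1eq]⟩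
  · rintro ⟨e1, e2⟩
    rw [e1, e2]
    have key : Θ⁻¹ *ᵥ (Θ *ᵥ (Ψ *ᵥ y)) = Ψ *ᵥ y := by
      rw [Matrix.mulVec_mulVec, hΘ2, Matrix.one_mulVec]
    have hy : Ψ *ᵥ y + μ • (L *ᵥ (Ψ *ᵥ y)) = y := by
      have : ((1 : Matrix (Fin M) (Fin M) ℝ) + μ • L) *ᵥ (Ψ *ᵥ y) = y := by
        rw [Matrix.mulVec_mulVec, hΨr, Matrix.one_mulVec]
      rwa [add_mulVec, Matrix.one_mulVec, smul_mulVec] at this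
    constructor
    · rw [key]
      calc (1 + γ) • (Ψ *ᵥ y) + μ • (L *ᵥ (Ψ *ᵥ y)) + -(γ • (Ψ *ᵥ y))
          = Ψ *ᵥ y + μ • (L *ᵥ (Ψ *ᵥ y)) := by rw [add_smul, one_smul]; abel
        _ = y := hy
    · rw [key]
      abel
end
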